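/- Let T > 0, θ > 0 and let v : ℝ³ × (0,T] → ℝ³ be measurable with v(·,s) ∈ L⁸(ℝ³;ℝ³) for each s and sup_{0<s≤T} s^{5/16} ‖v(·,s)‖_{L⁸(ℝ³)} ≤ θ. Then there exists an absolute constant C > 0, independent of v, θ, T, such that for all t ∈ (0,T], ‖∫_0^t ∇G(·, t−s) ∗ (v ⊗ v)(·,s) ds‖_{L^∞(ℝ³)} ≤ C θ² t^{−1/2}. -/

import Mathlib

open MeasureTheory Real Set
open scoped ENNReal RealInnerProductSpace

noncomputable section

/-- Euclidean space `ℝ³`. -/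
abbrev E3 := EuclideanSpace ℝ (Fin 3)

/-- The heat kernel on `ℝ³`. -/
def heatKernel (t : ℝ) (x : E3) : ℝ :=
  (4 * Real.pi * t) ^ (-(3:ℝ)/2) * Real.exp (-‖x‖^2 / (4*t))

/-- The Duhamel-type term `∫₀ᵗ ∇G(·,t-s) ∗ (v ⊗ v)(·,s) ds`; componentwise
`(∇G ∗ (v ⊗ v))_i (x) = ∑_j (∂_j G) ∗ (v_i v_j) (x) = ∫ ⟪∇G(y), v(x-y)⟫ v_i(x-y) dy`. -/
def duhamel (v : ℝ → E3 → E3) (t : ℝ) (x : E3) : E3 :=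
  ∫ s in Set.Ioo (0 : ℝ) t, ∫ y : E3,
    ⟪gradient (heatKernel (t - s)) y, v s (x - y)⟫ • v s (x - y)


open scoped NNReal

/-!
For `0 < s < t`, Hölder's inequality with exponents `4/3` and `4` bounds the inner convolution
by `‖∇G(t - s)‖_{L^{4/3}} ‖v(s)‖_{L^8}²`. The Gaussian bound `|∇G(y, τ)| ≲ τ⁻² e^{-|y|²/(8τ)}`
gives `‖∇G(τ)‖_{L^{4/3}} ≲ τ^{-7/8}`, so the time integrand is `≲ θ² (t - s)^{-7/8} s^{-5/8}`.
This Beta-type integral is `≲ t^{-1/2}`: on each half of `(0, t)` one factor is at most its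
value at `t/2`. Each integral is bounded through `‖∫ f‖ₑ ≤ ∫⁻ ‖f‖ₑ`, which needs no
integrability of the Duhamel integrand.
-/

lemma mul_exp_neg_sq_div_le {c : ℝ} (hc : 0 < c) (r : ℝ) :
    r * Real.exp (-r ^ 2 / c) ≤ √c / 2 := by
  have hsc : 0 < √c := Real.sqrt_pos.2 hc
  have hamgm : 2 * √c * r ≤ √c * √c * (r ^ 2 / c + 1) := by
    rw [Real.mul_self_sqrt hc.le, mul_add, mul_div_cancel₀ _ hc.ne', mul_one]
    nlinarith [sq_nonneg (r - √c), Real.sq_sqrt hc.le]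
  have hexp : r ^ 2 / c + 1 ≤ Real.exp (r ^ 2 / c) := by
    linarith [Real.add_one_le_exp (r ^ 2 / c)]
  rw [neg_div, Real.exp_neg, ← div_eq_mul_inv, div_le_div_iff₀ (Real.exp_pos _) two_pos]
  nlinarith [mul_le_mul_of_nonneg_left hexp (mul_pos hsc hsc).le]

lemma eLpNorm_exp_neg_mul_sq_norm {V : Type*} [NormedAddCommGroup V] [InnerProductSpace ℝ V]
    [FiniteDimensional ℝ V] [MeasurableSpace V] [BorelSpace V] {b p : ℝ} (hb : 0 < b)
    (hp : 0 < p) :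
    eLpNorm (fun v : V => Real.exp (-b * ‖v‖ ^ 2)) (ENNReal.ofReal p) volume
      = ENNReal.ofReal ((π / (p * b)) ^ (Module.finrank ℝ V / (2 * p))) := by
  have hpb : 0 < p * b := mul_pos hp hb
  have hpow : ∀ v : V, ‖Real.exp (-b * ‖v‖ ^ 2)‖ₑ ^ p
      = ENNReal.ofReal (Real.exp (-(p * b) * ‖v‖ ^ 2)) := fun v => by
    rw [Real.enorm_of_nonneg (Real.exp_pos _).le, ENNReal.ofReal_rpow_of_nonneg
      (Real.exp_pos _).le hp.le, ← Real.exp_mul]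
    ring_nf
  have hint := GaussianFourier.integral_rexp_neg_mul_sq_norm (V := V) hpb
  rw [eLpNorm_eq_lintegral_rpow_enorm_toReal (by simpa using hp) ENNReal.ofReal_ne_top,
    ENNReal.toReal_ofReal hp.le]
  simp_rw [hpow]
  rw [← ofReal_integral_eq_lintegral_ofReal
      (.of_integral_ne_zero (hint ▸ by positivity)) (ae_of_all _ fun _ => (Real.exp_pos _).le),
    hint, ENNReal.ofReal_rpow_of_nonneg (by positivity) (by positivity),
    ← Real.rpow_mul (by positivity)]
  ring_nf

lemma enorm_integral_inner_smul_sub_le {G F : Type*} [MeasurableSpace G] [AddGroup G]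
    [MeasurableAdd G] [MeasurableNeg G] {μ : Measure G} [μ.IsNegInvariant] [μ.IsAddLeftInvariant]
    [NormedAddCommGroup F] [InnerProductSpace ℝ F] {g w : G → F}
    (hg : AEStronglyMeasurable g μ) (hw : AEStronglyMeasurable w μ)
    (p q : ℝ≥0∞) [p.HolderConjugate q] (x : G) :
    ‖∫ y, ⟪g y, w (x - y)⟫ • w (x - y) ∂μ‖ₑ ≤ eLpNorm g p μ * eLpNorm w (q * 2) μ ^ 2 := by
  have hsub := Measure.measurePreserving_sub_left μ x
  have hwx : AEStronglyMeasurable (fun y => w (x - y)) μ := hw.comp_measurePreserving hsub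
  have hpt (y : G) : ‖⟪g y, w (x - y)⟫ • w (x - y)‖ₑ ≤ ‖‖g y‖ * ‖w (x - y)‖ ^ (2:ℝ)‖ₑ := by
    rw [enorm_le_iff_norm_le, norm_smul, Real.rpow_two, norm_mul, norm_norm, norm_pow, norm_norm,
      sq, ← mul_assoc]
    exact mul_le_mul_of_nonneg_right (abs_real_inner_le_norm _ _) (norm_nonneg _)
  calc ‖∫ y, ⟪g y, w (x - y)⟫ • w (x - y) ∂μ‖ₑ
      ≤ ∫⁻ y, ‖‖g y‖ * ‖w (x - y)‖ ^ (2:ℝ)‖ₑ ∂μ :=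
        (enorm_integral_le_lintegral_enorm _).trans (lintegral_mono hpt)
    _ = eLpNorm (fun y => ‖g y‖ * ‖w (x - y)‖ ^ (2:ℝ)) 1 μ := eLpNorm_one_eq_lintegral_enorm.symm
    _ ≤ (1 : ℝ≥0) * eLpNorm g p μ * eLpNorm (fun y => ‖w (x - y)‖ ^ (2:ℝ)) q μ :=
        eLpNorm_le_eLpNorm_mul_eLpNorm'_of_norm hg
          (hwx.norm.aemeasurable.pow_const _).aestronglyMeasurable (fun u r => ‖u‖ * r) 1
          (ae_of_all _ fun y => by simp)
    _ = eLpNorm g p μ * eLpNorm w (q * 2) μ ^ 2 := by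
        rw [eLpNorm_norm_rpow _ two_pos, ← Function.comp_def w,
          eLpNorm_comp_measurePreserving hw hsub]
        simp

lemma setLIntegral_Ioc_rpow {b c : ℝ} (hb : -1 < b) (hc : 0 ≤ c) :
    ∫⁻ s in Ioc 0 c, ENNReal.ofReal (s ^ b) = ENNReal.ofReal (c ^ (b + 1) / (b + 1)) := by
  have hint : IntervalIntegrable (fun s : ℝ => s ^ b) volume 0 c :=
    intervalIntegral.intervalIntegrable_rpow' hb
  rw [← ofReal_integral_eq_lintegral_ofReal
      ((intervalIntegrable_iff_integrableOn_Ioc_of_le hc).1 hint)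
      ((ae_restrict_iff' measurableSet_Ioc).2
        (ae_of_all _ fun s hs => Real.rpow_nonneg hs.1.le _)),
    ← intervalIntegral.integral_of_le hc, integral_rpow (Or.inl hb),
    Real.zero_rpow (by linarith), sub_zero]

lemma setLIntegral_Ioc_sub_rpow {a c t : ℝ} (ha : -1 < a) (hc : 0 ≤ c) :
    ∫⁻ s in Ioc (t - c) t, ENNReal.ofReal ((t - s) ^ a)
      = ENNReal.ofReal (c ^ (a + 1) / (a + 1)) := by
  have hint : IntervalIntegrable (fun s : ℝ => (t - s) ^ a) volume (t - c) t := by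
    simpa using
      ((intervalIntegral.intervalIntegrable_rpow' ha (a := 0) (b := c)).comp_sub_left t).symm
  rw [← ofReal_integral_eq_lintegral_ofReal
      ((intervalIntegrable_iff_integrableOn_Ioc_of_le (by linarith)).1 hint)
      ((ae_restrict_iff' measurableSet_Ioc).2
        (ae_of_all _ fun s hs => Real.rpow_nonneg (sub_nonneg.2 hs.2) _)),
    ← intervalIntegral.integral_of_le (by linarith),
    intervalIntegral.integral_comp_sub_left (fun u => u ^ a), sub_self, sub_sub_cancel,
    integral_rpow (Or.inl ha), Real.zero_rpow (by linarith), sub_zero]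

lemma setLIntegral_Ioo_sub_rpow_mul_rpow_le {a b t : ℝ} (ha : -1 < a) (ha' : a ≤ 0) (hb : -1 < b)
    (hb' : b ≤ 0) (ht : 0 < t) :
    ∫⁻ s in Ioo 0 t, ENNReal.ofReal ((t - s) ^ a * s ^ b)
      ≤ ENNReal.ofReal ((t / 2) ^ (a + b + 1) * (1 / (a + 1) + 1 / (b + 1))) := by
  have ht2 : 0 < t / 2 := half_pos ht
  have hsplit : Ioo 0 t ⊆ Ioc 0 (t / 2) ∪ Ioc (t / 2) t := fun s hs => by
    rcases le_or_gt s (t / 2) with h | h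
    exacts [Or.inl ⟨hs.1, h⟩, Or.inr ⟨h, hs.2.le⟩]
  have hleft : ∀ s ∈ Ioc 0 (t / 2), ENNReal.ofReal ((t - s) ^ a * s ^ b)
      ≤ ENNReal.ofReal ((t / 2) ^ a) * ENNReal.ofReal (s ^ b) := fun s hs => by
    rw [← ENNReal.ofReal_mul (by positivity)]
    exact ENNReal.ofReal_le_ofReal (mul_le_mul_of_nonneg_right
      (Real.rpow_le_rpow_of_nonpos ht2 (by linarith [hs.2]) ha') (Real.rpow_nonneg hs.1.le _))
  have hright : ∀ s ∈ Ioc (t / 2) t, ENNReal.ofReal ((t - s) ^ a * s ^ b)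
      ≤ ENNReal.ofReal ((t / 2) ^ b) * ENNReal.ofReal ((t - s) ^ a) := fun s hs => by
    rw [← ENNReal.ofReal_mul (by positivity), mul_comm]
    exact ENNReal.ofReal_le_ofReal (mul_le_mul_of_nonneg_right
      (Real.rpow_le_rpow_of_nonpos ht2 hs.1.le hb') (Real.rpow_nonneg (sub_nonneg.2 hs.2) _))
  calc ∫⁻ s in Ioo 0 t, ENNReal.ofReal ((t - s) ^ a * s ^ b)
      ≤ ∫⁻ s in Ioc 0 (t / 2) ∪ Ioc (t / 2) t, ENNReal.ofReal ((t - s) ^ a * s ^ b) :=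
        lintegral_mono_set hsplit
    _ ≤ (∫⁻ s in Ioc 0 (t / 2), ENNReal.ofReal ((t - s) ^ a * s ^ b))
          + ∫⁻ s in Ioc (t / 2) t, ENNReal.ofReal ((t - s) ^ a * s ^ b) :=
        lintegral_union_le _ _ _
    _ ≤ ENNReal.ofReal ((t / 2) ^ a) * (∫⁻ s in Ioc 0 (t / 2), ENNReal.ofReal (s ^ b))
          + ENNReal.ofReal ((t / 2) ^ b)
            * ∫⁻ s in Ioc (t - t / 2) t, ENNReal.ofReal ((t - s) ^ a) := by
        rw [sub_half, ← lintegral_const_mul' _ _ ENNReal.ofReal_ne_top,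
          ← lintegral_const_mul' _ _ ENNReal.ofReal_ne_top]
        exact add_le_add (setLIntegral_mono' measurableSet_Ioc hleft)
          (setLIntegral_mono' measurableSet_Ioc hright)
    _ = ENNReal.ofReal ((t / 2) ^ (a + b + 1) * (1 / (a + 1) + 1 / (b + 1))) := by
        have hnn : ∀ e : ℝ, -1 < e → 0 ≤ (t / 2) ^ (e + 1) / (e + 1) := fun e he =>
          div_nonneg (Real.rpow_nonneg ht2.le _) (by linarith)
        rw [setLIntegral_Ioc_rpow hb ht2.le, setLIntegral_Ioc_sub_rpow ha ht2.le,
          ← ENNReal.ofReal_mul (Real.rpow_nonneg ht2.le _),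
          ← ENNReal.ofReal_mul (Real.rpow_nonneg ht2.le _),
          ← ENNReal.ofReal_add (mul_nonneg (Real.rpow_nonneg ht2.le _) (hnn b hb))
            (mul_nonneg (Real.rpow_nonneg ht2.le _) (hnn a ha))]
        congr 1
        simp only [Real.rpow_add ht2]
        ring

lemma setLIntegral_Ioo_sub_rpow_seven_eighths_mul_rpow_five_eighths_le {t : ℝ} (ht : 0 < t) :
    ∫⁻ s in Ioo 0 t, ENNReal.ofReal ((t - s) ^ (-(7 / 8 : ℝ)) * s ^ (-(5 / 8 : ℝ)))
      ≤ ENNReal.ofReal (32 / 3 * √2 * t ^ (-(1 / 2 : ℝ))) := by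
  have hhalf : (t / 2) ^ (-(1 / 2 : ℝ)) = √2 * t ^ (-(1 / 2 : ℝ)) := by
    rw [Real.div_rpow ht.le zero_le_two, Real.rpow_neg zero_le_two, ← Real.sqrt_eq_rpow,
      div_inv_eq_mul, mul_comm]
  refine (setLIntegral_Ioo_sub_rpow_mul_rpow_le (by norm_num) (by norm_num) (by norm_num)
    (by norm_num) ht).trans_eq ?_
  congr 1
  norm_num [hhalf]
  ring

lemma hasGradientAt_heatKernel {τ : ℝ} (hτ : 0 < τ) (y : E3) :
    HasGradientAt (heatKernel τ) ((-(2 * τ)⁻¹ * heatKernel τ y) • y) y := by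
  have hexp : HasFDerivAt (fun x : E3 => Real.exp (-‖x‖ ^ 2 / (4 * τ)))
      (Real.exp (-‖y‖ ^ 2 / (4 * τ)) • (-(4 * τ)⁻¹ • (2 • innerSL ℝ y))) y := by
    have hsq := (hasStrictFDerivAt_norm_sq y).hasFDerivAt.const_smul (-(4 * τ)⁻¹)
    have hfun : (fun x : E3 => -‖x‖ ^ 2 / (4 * τ)) = fun x => -(4 * τ)⁻¹ • ‖x‖ ^ 2 := by
      funext x
      simp only [smul_eq_mul]
      ring
    exact (Real.hasDerivAt_exp _).comp_hasFDerivAt y (hfun ▸ hsq)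
  rw [hasGradientAt_iff_hasFDerivAt]
  refine (hexp.const_mul ((4 * π * τ) ^ (-(3:ℝ)/2))).congr_fderiv ?_
  ext z
  simp only [heatKernel, InnerProductSpace.toDual_apply_apply, smul_apply,
    coe_innerSL_apply, real_inner_smul_left, smul_eq_mul, nsmul_eq_mul, Nat.cast_ofNat]
  field_simp
  ring

lemma gradient_heatKernel {τ : ℝ} (hτ : 0 < τ) :
    gradient (heatKernel τ) = fun y => (-(2 * τ)⁻¹ * heatKernel τ y) • y :=
  funext fun y => (hasGradientAt_heatKernel hτ y).gradient

lemma continuous_gradient_heatKernel {τ : ℝ} (hτ : 0 < τ) :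
    Continuous (gradient (heatKernel τ)) := by
  rw [gradient_heatKernel hτ]
  unfold heatKernel
  fun_prop

lemma norm_gradient_heatKernel_le {τ : ℝ} (hτ : 0 < τ) (y : E3) :
    ‖gradient (heatKernel τ) y‖
      ≤ (4 * π * τ) ^ (-(3:ℝ)/2) * √(8 * τ) / (4 * τ) * Real.exp (-(8 * τ)⁻¹ * ‖y‖ ^ 2) := by
  have hsplit : Real.exp (-‖y‖ ^ 2 / (4 * τ))
      = Real.exp (-(8 * τ)⁻¹ * ‖y‖ ^ 2) * Real.exp (-‖y‖ ^ 2 / (8 * τ)) := by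
    rw [← Real.exp_add]
    congr 1
    ring
  have hdecay := mul_exp_neg_sq_div_le (by positivity : 0 < 8 * τ) ‖y‖
  rw [gradient_heatKernel hτ, norm_smul, norm_mul, norm_neg, norm_inv,
    Real.norm_of_nonneg (by positivity : 0 ≤ 2 * τ),
    Real.norm_of_nonneg (by unfold heatKernel; positivity : 0 ≤ heatKernel τ y),
    heatKernel, hsplit]
  calc (2 * τ)⁻¹ * ((4 * π * τ) ^ (-(3:ℝ)/2)
          * (Real.exp (-(8 * τ)⁻¹ * ‖y‖ ^ 2) * Real.exp (-‖y‖ ^ 2 / (8 * τ)))) * ‖y‖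
        = (2 * τ)⁻¹ * (4 * π * τ) ^ (-(3:ℝ)/2) * Real.exp (-(8 * τ)⁻¹ * ‖y‖ ^ 2)
          * (‖y‖ * Real.exp (-‖y‖ ^ 2 / (8 * τ))) := by ring
    _ ≤ (2 * τ)⁻¹ * (4 * π * τ) ^ (-(3:ℝ)/2) * Real.exp (-(8 * τ)⁻¹ * ‖y‖ ^ 2)
          * (√(8 * τ) / 2) := by gcongr
    _ = _ := by field_simp; ring

def gradHeatKernelLpConst (p : ℝ) : ℝ :=
  (4 * π) ^ (-(3:ℝ)/2) * √8 / 4 * (8 * π / p) ^ (3 / (2 * p))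

lemma gradHeatKernelLpConst_pos (p : ℝ) (hp : 0 < p) : 0 < gradHeatKernelLpConst p := by
  unfold gradHeatKernelLpConst
  positivity

lemma eLpNorm_gradient_heatKernel_le {τ p : ℝ} (hτ : 0 < τ) (hp : 0 < p) :
    eLpNorm (gradient (heatKernel τ)) (ENNReal.ofReal p) volume
      ≤ ENNReal.ofReal (gradHeatKernelLpConst p * τ ^ (3 / (2 * p) - 2)) := by
  set c := (4 * π * τ) ^ (-(3:ℝ)/2) * √(8 * τ) / (4 * τ) with hc
  have hτpow : τ ^ (-(3:ℝ)/2) = (τ * √τ)⁻¹ := by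
    rw [Real.sqrt_eq_rpow, ← Real.rpow_one_add' hτ.le (by norm_num), ← Real.rpow_neg hτ.le]
    norm_num
  calc eLpNorm (gradient (heatKernel τ)) (ENNReal.ofReal p) volume
      ≤ eLpNorm (c • fun y : E3 => Real.exp (-(8 * τ)⁻¹ * ‖y‖ ^ 2)) (ENNReal.ofReal p) volume :=
        eLpNorm_mono_real (norm_gradient_heatKernel_le hτ)
    _ = ENNReal.ofReal c * ENNReal.ofReal ((π / (p * (8 * τ)⁻¹)) ^ (3 / (2 * p))) := by
        rw [eLpNorm_const_smul, Real.enorm_of_nonneg (by positivity),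
          eLpNorm_exp_neg_mul_sq_norm (by positivity) hp, finrank_euclideanSpace_fin]
        norm_num
    _ = _ := by
        rw [← ENNReal.ofReal_mul (by positivity)]
        congr 1
        rw [show π / (p * (8 * τ)⁻¹) = 8 * π / p * τ by field_simp,
          Real.mul_rpow (by positivity) hτ.le, Real.rpow_sub hτ, Real.rpow_two,
          gradHeatKernelLpConst, hc, Real.mul_rpow (by positivity) hτ.le, hτpow,
          Real.sqrt_mul (by norm_num)]
        have hsqrt : 0 < √τ := Real.sqrt_pos.2 hτ
        field_simp

lemma enorm_integral_gradient_heatKernel_le {τ : ℝ} (hτ : 0 < τ) {w : E3 → E3}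
    (hw : AEStronglyMeasurable w) (x : E3) :
    ‖∫ y, ⟪gradient (heatKernel τ) y, w (x - y)⟫ • w (x - y)‖ₑ
      ≤ ENNReal.ofReal (gradHeatKernelLpConst (4 / 3) * τ ^ (-(7 / 8 : ℝ)))
        * eLpNorm w 8 volume ^ 2 := by
  have : ENNReal.HolderConjugate (ENNReal.ofReal (4 / 3)) 4 := by
    simpa using ((Real.holderConjugate_iff_eq_conjExponent (by norm_num : (1:ℝ) < 4 / 3)).2
      (by norm_num : (4:ℝ) = 4 / 3 / (4 / 3 - 1))).ennrealOfReal
  calc ‖∫ y, ⟪gradient (heatKernel τ) y, w (x - y)⟫ • w (x - y)‖ₑ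
      ≤ eLpNorm (gradient (heatKernel τ)) (ENNReal.ofReal (4 / 3)) volume
          * eLpNorm w (4 * 2) volume ^ 2 :=
        enorm_integral_inner_smul_sub_le
          (continuous_gradient_heatKernel hτ).aestronglyMeasurable hw _ _ x
    _ ≤ _ := by
        rw [show (4 : ℝ≥0∞) * 2 = 8 by norm_num]
        gcongr
        refine (eLpNorm_gradient_heatKernel_le hτ (by norm_num)).trans_eq ?_
        norm_num

lemma enorm_duhamel_le {v : ℝ → E3 → E3} {θ t : ℝ}
    (hv : Measurable (fun p : ℝ × E3 => v p.1 p.2)) (hθ : 0 ≤ θ) (ht : 0 < t)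
    (h8 : ∀ s ∈ Ioo 0 t, eLpNorm (v s) 8 volume ≤ ENNReal.ofReal (θ * s ^ (-(5 / 16 : ℝ))))
    (x : E3) :
    ‖duhamel v t x‖ₑ
      ≤ ENNReal.ofReal (gradHeatKernelLpConst (4 / 3) * (32 / 3 * √2) * θ ^ 2
          * t ^ (-(1 / 2 : ℝ))) := by
  set K := gradHeatKernelLpConst (4 / 3)
  have hK : 0 ≤ K := (gradHeatKernelLpConst_pos _ (by norm_num)).le
  have hinner : ∀ s ∈ Ioo 0 t,
      ‖∫ y, ⟪gradient (heatKernel (t - s)) y, v s (x - y)⟫ • v s (x - y)‖ₑ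
        ≤ ENNReal.ofReal (K * θ ^ 2)
          * ENNReal.ofReal ((t - s) ^ (-(7 / 8 : ℝ)) * s ^ (-(5 / 8 : ℝ))) := fun s hs => by
    calc _ ≤ ENNReal.ofReal (K * (t - s) ^ (-(7 / 8 : ℝ))) * eLpNorm (v s) 8 volume ^ 2 :=
          enorm_integral_gradient_heatKernel_le (sub_pos.2 hs.2)
            (hv.comp measurable_prodMk_left).aestronglyMeasurable x
      _ ≤ ENNReal.ofReal (K * (t - s) ^ (-(7 / 8 : ℝ)))
            * ENNReal.ofReal (θ * s ^ (-(5 / 16 : ℝ))) ^ 2 := by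
          gcongr
          exact h8 s hs
      _ = _ := by
          rw [← ENNReal.ofReal_pow (mul_nonneg hθ (Real.rpow_nonneg hs.1.le _)),
            ← ENNReal.ofReal_mul (mul_nonneg hK (Real.rpow_nonneg (sub_pos.2 hs.2).le _)),
            ← ENNReal.ofReal_mul (mul_nonneg hK (sq_nonneg θ))]
          congr 1
          rw [mul_pow, ← Real.rpow_mul_natCast hs.1.le]
          norm_num
          ring
  calc ‖duhamel v t x‖ₑ
      ≤ ∫⁻ s in Ioo 0 t, ‖∫ y, ⟪gradient (heatKernel (t - s)) y, v s (x - y)⟫ • v s (x - y)‖ₑ :=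
        enorm_integral_le_lintegral_enorm _
    _ ≤ ∫⁻ s in Ioo 0 t, ENNReal.ofReal (K * θ ^ 2)
          * ENNReal.ofReal ((t - s) ^ (-(7 / 8 : ℝ)) * s ^ (-(5 / 8 : ℝ))) :=
        setLIntegral_mono' measurableSet_Ioo hinner
    _ = ENNReal.ofReal (K * θ ^ 2)
          * ∫⁻ s in Ioo 0 t, ENNReal.ofReal ((t - s) ^ (-(7 / 8 : ℝ)) * s ^ (-(5 / 8 : ℝ))) :=
        lintegral_const_mul' _ _ ENNReal.ofReal_ne_top
    _ ≤ ENNReal.ofReal (K * θ ^ 2) * ENNReal.ofReal (32 / 3 * √2 * t ^ (-(1 / 2 : ℝ))) := by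
        gcongr
        exact setLIntegral_Ioo_sub_rpow_seven_eighths_mul_rpow_five_eighths_le ht
    _ = _ := by
        rw [← ENNReal.ofReal_mul (by positivity)]
        ring_nf

theorem duhamel_term_Linfty_estimate :
    ∃ C : ℝ, 0 < C ∧
      ∀ T θ : ℝ, 0 < T → 0 < θ →
        ∀ v : ℝ → E3 → E3, Measurable (fun p : ℝ × E3 => v p.1 p.2) →
          (∀ s ∈ Set.Ioc (0 : ℝ) T, MemLp (v s) 8 volume) →
          (∀ s ∈ Set.Ioc (0 : ℝ) T,
              eLpNorm (v s) 8 volume ≤ ENNReal.ofReal (θ * s ^ (-(5/16 : ℝ)))) →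
          ∀ t ∈ Set.Ioc (0 : ℝ) T,
            eLpNorm (duhamel v t) ⊤ volume
              ≤ ENNReal.ofReal (C * θ^2 * t ^ (-(1/2 : ℝ))) := by
  refine ⟨gradHeatKernelLpConst (4 / 3) * (32 / 3 * √2),
    mul_pos (gradHeatKernelLpConst_pos _ (by norm_num)) (by positivity), ?_⟩
  intro T θ _ hθ v hv _ h8 t ht
  rw [eLpNorm_exponent_top]
  exact eLpNormEssSup_le_of_ae_enorm_bound <| ae_of_all _ <|
    enorm_duhamel_le hv hθ.le ht.1 (fun s hs => h8 s ⟨hs.1, hs.2.le.trans ht.2⟩)
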